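/- arXiv:2501.11987 — 2 statements merged into one kernel-verified Lean document; each statement's English description precedes it below -/
import Mathlib

section
/- Let n ∈ ℕ with n ≥ 1 and x, λ ∈ ℝ. The generalized lower triangular Pascal matrix P_{n,λ}[x] is totally positive if and only if x ≥ (n−1)|λ| or x = k|λ| for some k ∈ {0, 1, …, n−1}. -/
/-!
Right multiplication by a transvection `1 + c E_{j+1,j}` with `c ≥ 0` adds `c` times column
`j + 1` to column `j`, which keeps every minor nonnegative. Hence every product of such
transvections, in particular every unit lower bidiagonal matrix with nonnegative entries, is
totally positive.

For `x ≥ (n - 1)|λ|` the matrix `P[x]` is such a product: `P[x] = diag(1, P[x + λ]) · B`, where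
`B` is bidiagonal with subdiagonal entries `x + (1 - l)λ`, and iterating gives `n` bidiagonal
factors whose entries are all at least `x - (n - 1)|λ|`. The generalized powers are of binomial
type, so `P[x] P[y] = P[x + y]` and `P[k|λ|] = P[|λ|]^k`; and `P[|λ|]` is bidiagonal when `λ < 0`
and a product of transvections when `λ > 0`.

Conversely, the entry `(m, 0)` (when `λ < 0`), resp. the minor on rows `1, …, m` and columns
`0, …, m - 1` (when `λ ≥ 0`), equals `∏_{t < m} (x - t|λ|)`, which is negative for
`m = ⌊x / |λ|⌋ + 2` unless `x` is one of the allowed values.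
-/

/-- `genPow x lam m` is the generalized power `x^{m|λ} = x(x+λ)⋯(x+(m−1)λ)`,
with `x^{0|λ} = 1`. -/
noncomputable def genPow (x lam : ℝ) (m : ℕ) : ℝ :=
  ∏ t ∈ Finset.range m, (x + t * lam)

/-- The generalized lower triangular Pascal matrix `P_{n,λ}[x]` (0-based
indices: entry `(i,j)` corresponds to math entry `(i+1, j+1)`). -/
noncomputable def genPascal (n : ℕ) (x lam : ℝ) :
    Matrix (Fin (n + 1)) (Fin (n + 1)) ℝ :=
  fun i j =>
    if (j : ℕ) ≤ (i : ℕ) then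
      genPow x lam ((i : ℕ) - (j : ℕ)) * ((i : ℕ).choose (j : ℕ)) else 0

/-- A square real matrix is totally positive if every minor (the determinant
of any square submatrix obtained by selecting rows and columns along strictly
increasing index sequences) is nonnegative. -/
def IsTotallyPositive {m : ℕ} (A : Matrix (Fin m) (Fin m) ℝ) : Prop :=
  ∀ (k : ℕ) (r c : Fin k → Fin m), StrictMono r → StrictMono c →
    0 ≤ (A.submatrix r c).det

open Matrix Finset

theorem StrictMono.update {α β : Type*} [LinearOrder α] [DecidableEq α] [Preorder β]
    {f : α → β} (hf : StrictMono f) {a : α} {b : β} (hlt : ∀ u < a, f u < b)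
    (hgt : ∀ u, a < u → b < f u) : StrictMono (Function.update f a b) := by
  intro u v huv
  by_cases hu : u = a <;> by_cases hv : v = a
  · exact absurd (hu.trans hv.symm) huv.ne
  · subst hu; simpa [Function.update_of_ne hv] using hgt v huv
  · subst hv; simpa [Function.update_of_ne hu] using hlt u huv
  · simpa [Function.update_of_ne hu, Function.update_of_ne hv] using hf huv

section TotallyPositive

variable {N : ℕ}

theorem isTotallyPositive_one : IsTotallyPositive (1 : Matrix (Fin N) (Fin N) ℝ) := by
  intro k r c hr hc
  by_cases h : ∀ i, r i ∈ Set.range c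
  · have hrange : Set.range r = Set.range c := by
      refine Set.eq_of_subset_of_ncard_le (Set.range_subset_iff.2 h) ?_ (Set.toFinite _)
      rw [Set.ncard_range_of_injective hr.injective, Set.ncard_range_of_injective hc.injective]
    obtain rfl := (hr.range_inj hc).1 hrange
    rw [submatrix_one _ hr.injective, det_one]
    exact zero_le_one
  · push Not at h
    obtain ⟨i, hi⟩ := h
    rw [det_eq_zero_of_row_eq_zero i fun j => by
      simp [one_apply, show r i ≠ c j from fun h => hi ⟨j, h.symm⟩]]

theorem IsTotallyPositive.apply_nonneg {A : Matrix (Fin N) (Fin N) ℝ} (hA : IsTotallyPositive A)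
    (i j : Fin N) : 0 ≤ A i j := by
  simpa using hA 1 (fun _ => i) (fun _ => j) (Subsingleton.strictMono _) (Subsingleton.strictMono _)

/-- By multilinearity, a minor through column `j` becomes itself plus `c` times the minor with
column `j` replaced by the adjacent column `j + 1`, which is again a minor of `A` or has two equal
columns. -/
theorem IsTotallyPositive.mul_transvection {A : Matrix (Fin N) (Fin N) ℝ}
    (hA : IsTotallyPositive A) {i j : Fin N} (hij : (i : ℕ) = j + 1) {c : ℝ} (hc : 0 ≤ c) :
    IsTotallyPositive (A * transvection i j c) := by
  have hne : i ≠ j := fun h => by rw [h] at hij; omega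
  intro k r cs hr hcs
  by_cases hj : ∃ a, cs a = j
  swap
  · push Not at hj
    have hsub : (A * transvection i j c).submatrix r cs = A.submatrix r cs := by
      ext a b
      exact mul_transvection_apply_of_ne (hb := hj b) ..
    rw [hsub]
    exact hA k r cs hr hcs
  obtain ⟨a, rfl⟩ := hj
  have hsub : (A * transvection i (cs a) c).submatrix r cs
      = (A.submatrix r cs).updateCol a
          ((fun b => A.submatrix r cs b a) + c • fun b => A (r b) i) := by
    ext b b'
    rcases eq_or_ne b' a with rfl | hb'
    · simp
    · simp only [updateCol_ne hb', submatrix_apply]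
      exact mul_transvection_apply_of_ne (hb := hcs.injective.ne hb') ..
  have hshift : (A.submatrix r cs).updateCol a (fun b => A (r b) i)
      = A.submatrix r (Function.update cs a i) := by
    ext b b'
    rcases eq_or_ne b' a with rfl | hb'
    · simp
    · simp [updateCol_ne hb', Function.update_of_ne hb']
  have hminor : 0 ≤ (A.submatrix r (Function.update cs a i)).det := by
    by_cases hi : ∃ a', cs a' = i
    · obtain ⟨a', ha'⟩ := hi
      have ha'a : a' ≠ a := by rintro rfl; exact hne ha'.symm
      rw [det_zero_of_column_eq ha'a fun b => by
        simp [Function.update_of_ne ha'a, ha']]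
    · push Not at hi
      refine hA k r _ hr (hcs.update (fun u hu => ?_) (fun u hu => ?_))
      · have := hcs hu
        rw [Fin.lt_def] at this ⊢
        omega
      · have h1 := hcs hu
        have h2 := Fin.val_ne_of_ne (hi u)
        rw [Fin.lt_def] at h1 ⊢
        omega
  rw [hsub, det_updateCol_add, det_updateCol_smul, updateCol_eq_self, hshift]
  exact add_nonneg (hA k r cs hr hcs) (mul_nonneg hc hminor)

def nonnegSubdiagTransvections (N : ℕ) : Submonoid (Matrix (Fin N) (Fin N) ℝ) :=
  Submonoid.closure
    {M | ∃ (i j : Fin N) (c : ℝ), (i : ℕ) = j + 1 ∧ 0 ≤ c ∧ transvection i j c = M}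

theorem IsTotallyPositive.mul_mem {A M : Matrix (Fin N) (Fin N) ℝ} (hA : IsTotallyPositive A)
    (hM : M ∈ nonnegSubdiagTransvections N) : IsTotallyPositive (A * M) := by
  induction hM using Submonoid.closure_induction generalizing A with
  | mem M hM =>
    obtain ⟨i, j, c, hij, hc, rfl⟩ := hM
    exact hA.mul_transvection hij hc
  | one => rwa [mul_one]
  | mul M M' _ _ ih ih' => rw [← Matrix.mul_assoc]; exact ih' (ih hA)

theorem IsTotallyPositive.of_mem {M : Matrix (Fin N) (Fin N) ℝ}
    (hM : M ∈ nonnegSubdiagTransvections N) : IsTotallyPositive M := by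
  simpa using isTotallyPositive_one.mul_mem hM

end TotallyPositive

section GenPow

variable (x y lam : ℝ)

@[simp] theorem genPow_zero : genPow x lam 0 = 1 := by simp [genPow]

theorem genPow_succ (m : ℕ) : genPow x lam (m + 1) = genPow x lam m * (x + m * lam) :=
  prod_range_succ _ m

theorem genPow_succ' (m : ℕ) : genPow x lam (m + 1) = x * genPow (x + lam) lam m := by
  simp only [genPow, prod_range_succ', Nat.cast_zero, zero_mul, add_zero, Nat.cast_succ]
  rw [mul_comm]
  congr 1
  exact prod_congr rfl fun t _ => by ring

theorem genPow_zero_left {m : ℕ} (hm : m ≠ 0) : genPow 0 lam m = 0 := by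
  obtain ⟨m, rfl⟩ := Nat.exists_eq_succ_of_ne_zero hm
  rw [genPow_succ', zero_mul]

theorem genPow_self (m : ℕ) : genPow lam lam m = m.factorial * lam ^ m := by
  induction m with
  | zero => simp
  | succ m ih =>
    rw [genPow_succ, ih, Nat.factorial_succ, pow_succ]
    push_cast
    ring

theorem genPow_add (m : ℕ) :
    genPow (x + y) lam m =
      ∑ ij ∈ antidiagonal m, m.choose ij.1 * (genPow x lam ij.1 * genPow y lam ij.2) := by
  induction m with
  | zero => simp
  | succ m ih =>
    rw [sum_antidiagonal_choose_succ_mul (fun a b => genPow x lam a * genPow y lam b),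
      ← sum_add_distrib, genPow_succ, ih, sum_mul]
    refine sum_congr rfl fun ij hij => ?_
    rw [HasAntidiagonal.mem_antidiagonal] at hij
    have hm : (m : ℝ) = ij.1 + ij.2 := by exact_mod_cast hij.symm
    rw [Nat.choose_symm_of_eq_add hij.symm, genPow_succ, genPow_succ, hm]
    ring

end GenPow

section Arrays

def topLeft (N : ℕ) (f : ℕ → ℕ → ℝ) : Matrix (Fin N) (Fin N) ℝ :=
  Matrix.of fun i j => f i j

variable {N : ℕ}

theorem topLeft_mul_apply (f g : ℕ → ℕ → ℝ) (i j : Fin N) :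
    (topLeft N f * topLeft N g) i j = ∑ l ∈ range N, f i l * g l j :=
  Fin.sum_univ_eq_sum_range (fun l => f i l * g l j) N

theorem topLeft_ite_eq : topLeft N (fun i j => if i = j then 1 else 0) = 1 := by
  ext i j
  simp [topLeft, one_apply, Fin.val_inj]

/-- `Nat.choose` vanishes above the diagonal, so unlike `genPascal` this needs no case split. -/
noncomputable def pascalArray (x lam : ℝ) (i j : ℕ) : ℝ :=
  i.choose j * genPow x lam (i - j)

theorem genPascal_eq_topLeft (n : ℕ) (x lam : ℝ) :
    genPascal n x lam = topLeft (n + 1) (pascalArray x lam) := by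
  ext i j
  simp only [genPascal, topLeft, pascalArray, of_apply]
  split_ifs with h
  · ring
  · rw [Nat.choose_eq_zero_of_lt (not_le.1 h), Nat.cast_zero, zero_mul]

theorem pascalArray_of_lt {x lam : ℝ} {i j : ℕ} (h : i < j) : pascalArray x lam i j = 0 := by
  simp [pascalArray, Nat.choose_eq_zero_of_lt h]

theorem pascalArray_self (x lam : ℝ) (i : ℕ) : pascalArray x lam i i = 1 := by
  simp [pascalArray]

theorem pascalArray_zero_left (lam : ℝ) (i j : ℕ) :
    pascalArray 0 lam i j = if i = j then 1 else 0 := by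
  rcases lt_trichotomy i j with h | rfl | h
  · rw [pascalArray_of_lt h, if_neg h.ne]
  · rw [pascalArray_self, if_pos rfl]
  · rw [pascalArray, genPow_zero_left lam (Nat.sub_ne_zero_of_lt h), mul_zero, if_neg h.ne']

theorem pascalArray_succ_zero (x lam : ℝ) (i : ℕ) :
    pascalArray x lam (i + 1) 0 = x * pascalArray (x + lam) lam i 0 := by
  simp [pascalArray, genPow_succ']

theorem pascalArray_succ_succ (x lam : ℝ) (i j : ℕ) :
    pascalArray x lam (i + 1) (j + 1) =
      pascalArray (x + lam) lam i j +
        (x - (j + 1) * lam) * pascalArray (x + lam) lam i (j + 1) := by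
  rcases lt_or_ge i (j + 1) with h | h
  · rw [pascalArray_of_lt h, mul_zero, add_zero]
    rcases lt_or_eq_of_le (Nat.lt_succ_iff.1 h) with h | rfl
    · rw [pascalArray_of_lt h, pascalArray_of_lt (by omega)]
    · rw [pascalArray_self, pascalArray_self]
  obtain ⟨d, rfl⟩ := Nat.exists_eq_add_of_le h
  have hrule : ((j + 1 + d + 1).choose (j + 1) : ℝ) =
      (j + 1 + d).choose j + (j + 1 + d).choose (j + 1) := by
    exact_mod_cast Nat.choose_succ_succ' (j + 1 + d) j
  have hratio : ((j + 1 + d).choose (j + 1) : ℝ) * (j + 1) = (j + 1 + d).choose j * (d + 1) := by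
    have := Nat.choose_succ_right_eq (j + 1 + d) j
    rw [show j + 1 + d - j = d + 1 by omega] at this
    exact_mod_cast this
  simp only [pascalArray, show j + 1 + d + 1 - (j + 1) = d + 1 by omega,
    show j + 1 + d - j = d + 1 by omega, show j + 1 + d - (j + 1) = d by omega]
  rw [genPow_succ', genPow_succ (x + lam), hrule]
  linear_combination (lam * genPow (x + lam) lam d) * hratio

end Arrays

theorem pascalArray_mul (x y lam : ℝ) {N i : ℕ} (hi : i < N) (j : ℕ) :
    ∑ l ∈ range N, pascalArray x lam i l * pascalArray y lam l j =
      pascalArray (x + y) lam i j := by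
  rcases lt_or_ge i j with hij | hij
  · rw [pascalArray_of_lt hij]
    refine sum_eq_zero fun l _ => ?_
    rcases lt_or_ge i l with h | h
    · rw [pascalArray_of_lt h, zero_mul]
    · rw [pascalArray_of_lt (h.trans_lt hij), mul_zero]
  obtain ⟨d, rfl⟩ := Nat.exists_eq_add_of_le hij
  have hsupp : ∀ l ∈ range N, l ∉ Ico j (j + d + 1) →
      pascalArray x lam (j + d) l * pascalArray y lam l j = 0 := by
    intro l _ hl
    rw [mem_Ico, not_and_or, not_le, not_lt] at hl
    rcases hl with h | h
    · rw [pascalArray_of_lt h, mul_zero]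
    · rw [pascalArray_of_lt (show j + d < l by omega), zero_mul]
  rw [← sum_subset (fun l hl => mem_range.2 (by rw [mem_Ico] at hl; omega)) hsupp,
    sum_Ico_eq_sum_range, show j + d + 1 - j = d + 1 by omega, pascalArray,
    add_tsub_cancel_left, add_comm x, genPow_add,
    Nat.sum_antidiagonal_eq_sum_range_succ
      (fun a b => (d.choose a : ℝ) * (genPow y lam a * genPow x lam b)), mul_sum]
  refine sum_congr rfl fun b hb => ?_
  rw [mem_range] at hb
  have hchoose :
      ((j + d).choose (j + b) : ℝ) * (j + b).choose j = (j + d).choose j * d.choose b := by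
    have := Nat.choose_mul (n := j + d) (k := j + b) (s := j) (by omega)
    rw [add_tsub_cancel_left, add_tsub_cancel_left] at this
    exact_mod_cast this
  simp only [pascalArray, show j + d - (j + b) = d - b by omega, add_tsub_cancel_left]
  linear_combination (genPow x lam (d - b) * genPow y lam b) * hchoose

theorem genPascal_mul (n : ℕ) (x y lam : ℝ) :
    genPascal n x lam * genPascal n y lam = genPascal n (x + y) lam := by
  ext i j
  simp only [genPascal_eq_topLeft, topLeft_mul_apply, pascalArray_mul x y lam i.isLt]
  rfl

theorem genPascal_zero_left (n : ℕ) (lam : ℝ) : genPascal n 0 lam = 1 := by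
  rw [genPascal_eq_topLeft, funext₂ (pascalArray_zero_left lam), topLeft_ite_eq]

theorem genPascal_natCast_mul (n k : ℕ) (a lam : ℝ) :
    genPascal n (k * a) lam = genPascal n a lam ^ k := by
  induction k with
  | zero => simp [genPascal_zero_left]
  | succ k ih => rw [pow_succ, ← ih, genPascal_mul, Nat.cast_succ, add_one_mul]

section Bidiagonal

variable {N : ℕ}

def bidiagonal (s : ℕ → ℝ) (i j : ℕ) : ℝ :=
  if i = j then 1 else if i = j + 1 then s i else 0

theorem topLeft_mul_bidiagonal {f : ℕ → ℕ → ℝ} (hf : ∀ i j, i < j → f i j = 0) (s : ℕ → ℝ) :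
    topLeft N f * topLeft N (bidiagonal s) =
      topLeft N fun i j => f i j + s (j + 1) * f i (j + 1) := by
  ext i j
  have hsplit : ∀ l, f i l * bidiagonal s l j =
      (if j = l then f i l else 0) + (if j + 1 = l then s (j + 1) * f i (j + 1) else 0) := by
    intro l
    unfold bidiagonal
    split_ifs <;> first | omega | (subst_vars; ring)
  rw [topLeft_mul_apply, sum_congr rfl fun l _ => hsplit l, sum_add_distrib, sum_ite_eq,
    sum_ite_eq, if_pos (mem_range.2 j.isLt)]
  split_ifs with h
  · rfl
  · show _ = f i j + s (j + 1) * f i (j + 1)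
    rw [hf i (j + 1) (by rw [mem_range] at h; omega), mul_zero]

theorem topLeft_bidiagonal_mem {s : ℕ → ℝ} (hs : ∀ l < N, 0 ≤ s l) :
    topLeft N (bidiagonal s) ∈ nonnegSubdiagTransvections N := by
  let trunc (m : ℕ) : ℕ → ℝ := fun l => if l ≤ m then s l else 0
  suffices ∀ m, topLeft N (bidiagonal (trunc m)) ∈ nonnegSubdiagTransvections N by
    convert this N using 1
    ext i j
    simp [topLeft, bidiagonal, trunc]
  intro m
  induction m with
  | zero =>
    convert one_mem (nonnegSubdiagTransvections N)
    rw [← topLeft_ite_eq]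
    congr
    ext i j
    simp only [bidiagonal, trunc]
    split_ifs <;> first | rfl | omega
  | succ m ih =>
    by_cases hm : m + 1 < N
    · convert Submonoid.mul_mem _ ih (Submonoid.subset_closure
        ⟨⟨m + 1, hm⟩, ⟨m, by omega⟩, s (m + 1), rfl, hs _ hm, rfl⟩)
      ext i j
      by_cases hj : j = ⟨m, by omega⟩
      · subst hj
        rw [mul_transvection_apply_same]
        simp only [topLeft, of_apply, bidiagonal, trunc]
        split_ifs <;> first | omega | simp_all
      · rw [mul_transvection_apply_of_ne (hb := hj)]
        have : (j : ℕ) ≠ m := fun h => hj (Fin.ext h)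
        simp only [topLeft, of_apply, bidiagonal, trunc]
        split_ifs <;> first | rfl | omega
    · convert ih using 1
      ext i j
      have := i.isLt
      simp only [topLeft, of_apply, bidiagonal, trunc]
      split_ifs <;> first | rfl | omega

end Bidiagonal

section Factorization

variable (x lam : ℝ)

/-- The block diagonal array `I_t ⊕ P[x + tλ]`. -/
noncomputable def pascalBlock (t i j : ℕ) : ℝ :=
  if t ≤ i ∧ t ≤ j then pascalArray (x + t * lam) lam (i - t) (j - t) else if i = j then 1 else 0

noncomputable def pascalBlockWeight (t l : ℕ) : ℝ :=
  if t < l then x + (2 * t + 1 - l) * lam else 0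

theorem pascalBlock_zero : pascalBlock x lam 0 = pascalArray x lam := by
  ext i j
  simp [pascalBlock]

theorem pascalBlock_of_lt {t i j : ℕ} (h : i < j) : pascalBlock x lam t i j = 0 := by
  unfold pascalBlock
  split_ifs
  · exact pascalArray_of_lt (by omega)
  · omega
  · rfl

theorem pascalBlock_of_add_eq_zero {t : ℕ} (h : x + t * lam = 0) (i j : ℕ) :
    pascalBlock x lam t i j = if i = j then 1 else 0 := by
  unfold pascalBlock
  rw [h, pascalArray_zero_left]
  split_ifs <;> first | rfl | omega

theorem topLeft_pascalBlock_eq_one {N t : ℕ} (h : N ≤ t + 1) :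
    topLeft N (pascalBlock x lam t) = 1 := by
  rw [← topLeft_ite_eq]
  ext i j
  have := i.isLt
  have := j.isLt
  simp only [topLeft, of_apply, pascalBlock]
  split_ifs <;> first | rfl | omega | rw [show (i : ℕ) = j by omega, pascalArray_self]

theorem pascalBlock_add_add (t p q : ℕ) :
    pascalBlock x lam t (t + p) (t + q) = pascalArray (x + t * lam) lam p q := by
  simp [pascalBlock]

/-- `P[x] = diag(1, P[x + λ]) · B`, with `B` unit lower bidiagonal, shifted by `t`. -/
theorem pascalBlock_eq (t i j : ℕ) :
    pascalBlock x lam t i j = pascalBlock x lam (t + 1) i j +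
      pascalBlockWeight x lam t (j + 1) * pascalBlock x lam (t + 1) i (j + 1) := by
  rcases lt_or_ge i j with hij | hji
  · rw [pascalBlock_of_lt x lam hij, pascalBlock_of_lt x lam hij,
      pascalBlock_of_lt x lam (by omega : i < j + 1), mul_zero, add_zero]
  rcases lt_or_ge j t with hjt | htj
  · rw [pascalBlockWeight, if_neg (by omega), zero_mul, add_zero]
    unfold pascalBlock
    split_ifs <;> first | rfl | omega
  have hshift : x + ((t + 1 : ℕ) : ℝ) * lam = x + t * lam + lam := by push_cast; ring
  obtain ⟨q, rfl⟩ := Nat.exists_eq_add_of_le htj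
  obtain ⟨p, rfl⟩ := Nat.exists_eq_add_of_le (htj.trans hji)
  rw [pascalBlock_add_add]
  rcases q with _ | q
  · rcases p with _ | p
    · rw [pascalBlock_of_lt x lam (by omega : t + 0 < t + 0 + 1)]
      simp [pascalBlock, pascalArray_self]
    · have hw : pascalBlockWeight x lam t (t + 0 + 1) = x + t * lam := by
        rw [pascalBlockWeight, if_pos (by omega)]
        push_cast
        ring
      have h0 : pascalBlock x lam (t + 1) (t + 1 + p) (t + 0) = 0 := by
        simp [pascalBlock, show t + 1 + p ≠ t by omega]
      rw [show t + (p + 1) = t + 1 + p by ring, show t + 0 + 1 = t + 1 + 0 by ring,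
        pascalBlock_add_add, hw, h0, hshift, pascalArray_succ_zero, zero_add]
  · rcases p with _ | p
    · omega
    have hw : pascalBlockWeight x lam t (t + 1 + (q + 1)) = x + t * lam - (q + 1) * lam := by
      rw [pascalBlockWeight, if_pos (by omega)]
      push_cast
      ring
    rw [show t + (p + 1) = t + 1 + p by ring, show t + (q + 1) = t + 1 + q by ring,
      show t + 1 + q + 1 = t + 1 + (q + 1) by ring, pascalBlock_add_add, pascalBlock_add_add, hw,
      hshift, pascalArray_succ_succ]

end Factorization

theorem topLeft_mem_of_eq_mul_bidiagonal {N : ℕ} {F : ℕ → ℕ → ℕ → ℝ} {s : ℕ → ℕ → ℝ} {T : ℕ}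
    (hF : ∀ t i j, i < j → F t i j = 0)
    (hstep : ∀ t i j, F t i j = F (t + 1) i j + s t (j + 1) * F (t + 1) i (j + 1))
    (hs : ∀ t < T, ∀ l < N, 0 ≤ s t l)
    (hT : topLeft N (F T) ∈ nonnegSubdiagTransvections N) :
    topLeft N (F 0) ∈ nonnegSubdiagTransvections N := by
  refine Nat.decreasingInduction (motive := fun t _ => topLeft N (F t) ∈ _)
    (fun t ht ih => ?_) hT (Nat.zero_le T)
  have hfac : topLeft N (F t) = topLeft N (F (t + 1)) * topLeft N (bidiagonal (s t)) := by
    rw [topLeft_mul_bidiagonal (hF (t + 1))]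
    exact congrArg _ (funext₂ (hstep t))
  rw [hfac]
  exact Submonoid.mul_mem _ ih (topLeft_bidiagonal_mem (hs t ht))

theorem genPascal_mem_of_le {n : ℕ} {x lam : ℝ} (hx : ((n : ℝ) - 1) * |lam| ≤ x) :
    genPascal n x lam ∈ nonnegSubdiagTransvections (n + 1) := by
  rw [genPascal_eq_topLeft, ← pascalBlock_zero]
  refine topLeft_mem_of_eq_mul_bidiagonal (fun t i j => pascalBlock_of_lt x lam)
    (pascalBlock_eq x lam) (fun t ht l hl => ?_)
    (by rw [topLeft_pascalBlock_eq_one x lam le_rfl]; exact one_mem _)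
  unfold pascalBlockWeight
  split_ifs with htl
  · have htl' : (t : ℝ) + 1 ≤ l := by exact_mod_cast htl
    have hln : (l : ℝ) ≤ n := by exact_mod_cast Nat.lt_succ_iff.1 hl
    have htn : (t : ℝ) + 1 ≤ n := by exact_mod_cast ht
    have hcoef : |2 * (t : ℝ) + 1 - l| ≤ n - 1 := abs_le.2 ⟨by linarith, by linarith⟩
    calc 0 ≤ x - |2 * (t : ℝ) + 1 - l| * |lam| := by
          nlinarith [mul_le_mul_of_nonneg_right hcoef (abs_nonneg lam)]
      _ ≤ x + (2 * t + 1 - l) * lam := by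
          rw [← abs_mul]
          linarith [neg_abs_le ((2 * (t : ℝ) + 1 - l) * lam)]
  · exact le_rfl

theorem pascalArray_self_eq_succ (lam : ℝ) (i t : ℕ) :
    pascalArray lam lam i t =
      (if i = t then 1 else 0) + (t + 1) * lam * pascalArray lam lam i (t + 1) := by
  rcases lt_trichotomy i t with h | rfl | h
  · rw [pascalArray_of_lt h, pascalArray_of_lt (by omega), if_neg h.ne, mul_zero, add_zero]
  · rw [pascalArray_self, pascalArray_of_lt (by omega), if_pos rfl, mul_zero, add_zero]
  obtain ⟨d, rfl⟩ := Nat.exists_eq_add_of_lt h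
  have hratio : ((t + d + 1).choose (t + 1) : ℝ) * (t + 1) = (t + d + 1).choose t * (d + 1) := by
    have := Nat.choose_succ_right_eq (t + d + 1) t
    rw [show t + d + 1 - t = d + 1 by omega] at this
    exact_mod_cast this
  simp only [pascalArray, show t + d + 1 - t = d + 1 by omega,
    show t + d + 1 - (t + 1) = d by omega, genPow_self, if_neg (by omega : t + d + 1 ≠ t),
    Nat.factorial_succ, pow_succ]
  push_cast
  linear_combination (-(d.factorial : ℝ) * lam ^ d * lam) * hratio

noncomputable def pascalSelfFrom (lam : ℝ) (t i j : ℕ) : ℝ :=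
  if t ≤ j then pascalArray lam lam i j else if i = j then 1 else 0

theorem pascalSelfFrom_of_lt (lam : ℝ) {t i j : ℕ} (h : i < j) : pascalSelfFrom lam t i j = 0 := by
  unfold pascalSelfFrom
  split_ifs
  · exact pascalArray_of_lt h
  · omega
  · rfl

theorem pascalSelfFrom_eq (lam : ℝ) (t i j : ℕ) :
    pascalSelfFrom lam t i j = pascalSelfFrom lam (t + 1) i j +
      (if j + 1 = t + 1 then (t + 1) * lam else 0) * pascalSelfFrom lam (t + 1) i (j + 1) := by
  by_cases hj : j = t
  · subst hj
    simp only [pascalSelfFrom, le_refl, if_true, show ¬ j + 1 ≤ j by omega, if_false]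
    rw [pascalArray_self_eq_succ]
  · rw [if_neg (by omega), zero_mul, add_zero]
    unfold pascalSelfFrom
    split_ifs <;> first | rfl | omega

theorem topLeft_pascalSelfFrom_eq_one (lam : ℝ) {N t : ℕ} (h : N ≤ t + 1) :
    topLeft N (pascalSelfFrom lam t) = 1 := by
  rw [← topLeft_ite_eq]
  ext i j
  have := i.isLt
  have := j.isLt
  simp only [topLeft, of_apply, pascalSelfFrom]
  split_ifs <;> first | rfl | omega | rw [show (i : ℕ) = j by omega, pascalArray_self] |
    rw [pascalArray_of_lt (by omega)]

theorem genPascal_abs_mem (n : ℕ) (lam : ℝ) :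
    genPascal n |lam| lam ∈ nonnegSubdiagTransvections (n + 1) := by
  rw [genPascal_eq_topLeft]
  rcases lt_or_ge lam 0 with hlam | hlam
  · rw [abs_of_neg hlam, ← pascalBlock_zero]
    refine topLeft_mem_of_eq_mul_bidiagonal (T := 1) (fun t i j => pascalBlock_of_lt _ lam)
      (pascalBlock_eq _ lam) (fun t ht l _ => ?_) ?_
    · obtain rfl : t = 0 := by omega
      unfold pascalBlockWeight
      split_ifs
      · push_cast
        nlinarith [mul_nonneg (Nat.cast_nonneg l : (0 : ℝ) ≤ l) (neg_nonneg.2 hlam.le)]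
      · exact le_rfl
    · rw [funext₂ (pascalBlock_of_add_eq_zero _ lam (by push_cast; ring)), topLeft_ite_eq]
      exact one_mem _
  · rw [abs_of_nonneg hlam]
    have h0 : pascalSelfFrom lam 0 = pascalArray lam lam := by
      ext i j
      simp [pascalSelfFrom]
    rw [← h0]
    refine topLeft_mem_of_eq_mul_bidiagonal (T := n)
      (s := fun t l => if l = t + 1 then (t + 1) * lam else 0)
      (fun t i j => pascalSelfFrom_of_lt lam)
      (pascalSelfFrom_eq lam) (fun t _ l _ => ?_) ?_
    · split_ifs
      · positivity
      · exact le_rfl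
    · rw [topLeft_pascalSelfFrom_eq_one lam le_rfl]
      exact one_mem _

/-- The submatrix factors as `P_{m-1}[x + λ]` times an upper bidiagonal matrix with diagonal
`x - jλ`. -/
theorem det_genPascal_submatrix_succ {n m : ℕ} (h : m ≤ n) (x lam : ℝ) :
    ((genPascal n x lam).submatrix (fun i : Fin m => (Fin.castLE h i).succ)
        (Fin.castLE (h.trans n.le_succ))).det = ∏ t ∈ range m, (x - t * lam) := by
  let U : ℕ → ℕ → ℝ := fun i j => if i = j then x - j * lam else if i + 1 = j then 1 else 0
  have hfac : (genPascal n x lam).submatrix (fun i : Fin m => (Fin.castLE h i).succ)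
      (Fin.castLE (h.trans n.le_succ)) = topLeft m (pascalArray (x + lam) lam) * topLeft m U := by
    ext i j
    rw [topLeft_mul_apply]
    simp only [genPascal_eq_topLeft, submatrix_apply, topLeft, of_apply, Fin.val_succ,
      Fin.val_castLE]
    have hsplit : ∀ l, pascalArray (x + lam) lam i l * U l j =
        (if j = l then pascalArray (x + lam) lam i j * (x - j * lam) else 0) +
          (if j = l + 1 then pascalArray (x + lam) lam i l else 0) := by
      intro l
      simp only [U]
      split_ifs <;> first | omega | (subst_vars; ring)
    rw [sum_congr rfl fun l _ => hsplit l, sum_add_distrib, sum_ite_eq, if_pos (mem_range.2 j.isLt)]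
    rcases j with ⟨_ | j, hj⟩
    · simp [pascalArray_succ_zero, mul_comm]
    · simp only [Nat.add_right_cancel_iff, sum_ite_eq, mem_range.2 (Nat.lt_of_succ_lt hj), if_true]
      rw [pascalArray_succ_succ]
      push_cast
      ring
  have hlower : (topLeft m (pascalArray (x + lam) lam)).IsLowerTriangular :=
    fun i j hij => pascalArray_of_lt hij
  have hupper : (topLeft m U).IsUpperTriangular := fun i j hij => by
    have : (j : ℕ) < i := hij
    simp only [topLeft, of_apply, U]
    rw [if_neg (by omega), if_neg (by omega)]
  rw [hfac, det_mul, det_of_isLowerTriangular _ hlower, det_of_isUpperTriangular hupper,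
    ← Fin.prod_univ_eq_prod_range]
  simp [topLeft, U, pascalArray_self]

theorem IsTotallyPositive.prod_sub_abs_mul_nonneg {n : ℕ} {x lam : ℝ}
    (h : IsTotallyPositive (genPascal n x lam)) {m : ℕ} (hm : m ≤ n) :
    0 ≤ ∏ t ∈ range m, (x - t * |lam|) := by
  rcases le_or_gt 0 lam with hlam | hlam
  · rw [abs_of_nonneg hlam, ← det_genPascal_submatrix_succ hm]
    exact h m _ _ (Fin.strictMono_succ.comp (Fin.strictMono_castLE hm)) (Fin.strictMono_castLE _)
  · have hentry := h.apply_nonneg ⟨m, by omega⟩ 0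
    simpa [genPascal, genPow, abs_of_neg hlam] using hentry

theorem le_or_eq_natCast_mul_of_prod_sub_nonneg {n : ℕ} (hn : 1 ≤ n) {x μ : ℝ} (hμ : 0 ≤ μ)
    (h : ∀ m ≤ n, 0 ≤ ∏ t ∈ range m, (x - t * μ)) :
    ((n : ℝ) - 1) * μ ≤ x ∨ ∃ k : ℕ, k ≤ n - 1 ∧ x = k * μ := by
  by_contra! hcon
  obtain ⟨hlt, hne⟩ := hcon
  have hx : 0 ≤ x := by simpa using h 1 hn
  have hμpos : 0 < μ := by
    refine hμ.lt_of_ne fun h0 => ?_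
    rw [← h0, mul_zero] at hlt
    linarith
  set k := ⌊x / μ⌋₊
  have hk : k * μ ≤ x := (le_div_iff₀ hμpos).1 (Nat.floor_le (div_nonneg hx hμ))
  have hk' : x < (k + 1) * μ := (div_lt_iff₀ hμpos).1 (Nat.lt_floor_add_one _)
  have hkn : k + 2 ≤ n := by
    have : (k : ℝ) + 1 < n := by nlinarith
    exact_mod_cast this
  have hk_lt : k * μ < x := hk.lt_of_ne fun he => hne k (by omega) he.symm
  have hneg : ∏ t ∈ range (k + 2), (x - t * μ) < 0 := by
    rw [prod_range_succ]
    refine mul_neg_of_pos_of_neg (prod_pos fun t ht => ?_) (by push_cast; linarith)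
    have : (t : ℝ) ≤ k := by exact_mod_cast Nat.lt_succ_iff.1 (mem_range.1 ht)
    nlinarith
  linarith [h _ hkn]

/-- For `n ≥ 1`, the generalized lower triangular Pascal matrix `P_{n,λ}[x]`
is totally positive if and only if `x ≥ (n−1)|λ|` or `x = k|λ|` for some
`k ∈ {0, 1, …, n−1}`. -/
theorem genPascal_totallyPositive_iff (n : ℕ) (hn : 1 ≤ n) (x lam : ℝ) :
    IsTotallyPositive (genPascal n x lam) ↔
      ((n : ℝ) - 1) * |lam| ≤ x ∨ ∃ k : ℕ, k ≤ n - 1 ∧ x = (k : ℝ) * |lam| := by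
  refine ⟨fun h => le_or_eq_natCast_mul_of_prod_sub_nonneg hn (abs_nonneg lam)
    fun m hm => h.prod_sub_abs_mul_nonneg hm, ?_⟩
  rintro (hx | ⟨k, -, rfl⟩)
  · exact .of_mem (genPascal_mem_of_le hx)
  · rw [genPascal_natCast_mul]
    exact .of_mem (pow_mem (genPascal_abs_mem n lam) k)
end

section
/- Let n ∈ ℕ and x ∈ ℝ, and let P_n[x] be the (n+1)×(n+1) lower triangular matrix with (P_n[x])_{ij} = x^{i−j} · binom(i−1, j−1) for 1 ≤ j ≤ i ≤ n+1 and 0 for j > i. For each t = 1, …, n let F_t be the (n+1)×(n+1) lower bidiagonal matrix with ones on the diagonal, subdiagonal entries (F_t)_{r,r−1} = x for r = t+1, …, n+1, (F_t)_{r,r−1} = 0 for r ≤ t, and zeros elsewhere. Then P_n[x] = F_n F_{n−1} ⋯ F_1; that is, the bidiagonal decomposition of the generalized Pascal matrix of the first kind P_n[x] has all diagonal pivots equal to 1 and all multipliers equal to x. -/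
/-- The generalized Pascal matrix of the first kind `P_n[x]`, the
`(n+1)×(n+1)` lower triangular matrix with
`(P_n[x])_{ij} = x^{i−j}·binom(i−1, j−1)` for `1 ≤ j ≤ i ≤ n+1` and `0` for
`j > i` (0-based indexing). -/
noncomputable def pascalFirst (n : ℕ) (x : ℝ) :
    Matrix (Fin (n + 1)) (Fin (n + 1)) ℝ :=
  fun i j =>
    if (j : ℕ) ≤ (i : ℕ) then
      x ^ ((i : ℕ) - (j : ℕ)) * ((i : ℕ).choose (j : ℕ)) else 0

/-- The lower bidiagonal matrix `F_t` with ones on the diagonal and entry at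
math position `(r, r−1)` equal to `x` for `r = t+1, …, n+1`, zero for `r ≤ t`,
and zeros elsewhere.  In 0-based indexing, row `i` corresponds to `r = i+1`. -/
noncomputable def Fbar (n : ℕ) (x : ℝ) (t : ℕ) :
    Matrix (Fin (n + 1)) (Fin (n + 1)) ℝ :=
  fun i j =>
    if (i : ℕ) = (j : ℕ) then 1
    else if (i : ℕ) = (j : ℕ) + 1 ∧ t ≤ (i : ℕ) then x
    else 0

/-- Partial product `F_k ⋯ F_1`. -/
noncomputable def Gmat (n : ℕ) (x : ℝ) (k : ℕ) :
    Matrix (Fin (n + 1)) (Fin (n + 1)) ℝ :=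
  fun i j =>
    if (j : ℕ) ≤ (i : ℕ) then
      x ^ ((i : ℕ) - (j : ℕ)) * ((min (i : ℕ) k).choose ((i : ℕ) - (j : ℕ)))
    else 0

lemma Gmat_zero (n : ℕ) (x : ℝ) : Gmat n x 0 = 1 := by
  ext i j
  by_cases h : i = j
  · subst h; simp [Gmat, Matrix.one_apply]
  · have hne : ¬ (i = j) := h
    simp only [Gmat, Matrix.one_apply, if_neg hne, Nat.min_zero]
    split
    · next hle =>
      have : (i : ℕ) ≠ (j : ℕ) := fun hc => h (Fin.ext hc)
      rw [Nat.choose_eq_zero_of_lt (by omega)]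
      simp
    · rfl

lemma Gmat_step (n : ℕ) (x : ℝ) (k : ℕ) :
    Fbar n x (k + 1) * Gmat n x k = Gmat n x (k + 1) := by
  ext i j
  rw [Matrix.mul_apply]
  have hterm : ∀ l : Fin (n + 1), Fbar n x (k + 1) i l * Gmat n x k l j
      = (if l = i then Gmat n x k i j else 0)
        + (if (i : ℕ) = (l : ℕ) + 1 ∧ k + 1 ≤ (i : ℕ)
            then x * Gmat n x k l j else 0) := by
    intro l
    by_cases h1 : l = i
    · subst h1
      have h2 : ¬ ((l : ℕ) = (l : ℕ) + 1 ∧ k + 1 ≤ (l : ℕ)) := by omega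
      simp [Fbar, h2]
    · have h1' : (i : ℕ) ≠ (l : ℕ) := fun hc => h1 (Fin.ext hc).symm
      simp only [Fbar, if_neg h1', if_neg h1]
      by_cases h2 : (i : ℕ) = (l : ℕ) + 1 ∧ k + 1 ≤ (i : ℕ)
      · simp [h2]
      · simp [h2]
  rw [Finset.sum_congr rfl (fun l _ => hterm l), Finset.sum_add_distrib,
    Finset.sum_ite_eq' Finset.univ i (fun _ => Gmat n x k i j),
    if_pos (Finset.mem_univ i)]
  rcases Nat.eq_zero_or_pos (i : ℕ) with hi | hi
  · have h0 : ∀ l : Fin (n + 1),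
        ¬ ((i : ℕ) = (l : ℕ) + 1 ∧ k + 1 ≤ (i : ℕ)) := by omega
    rw [Finset.sum_eq_zero (fun l _ => if_neg (h0 l)), add_zero]
    simp [Gmat, hi]
  · set l₀ : Fin (n + 1) := ⟨(i : ℕ) - 1, by omega⟩ with hl₀def
    have hl₀ : (l₀ : ℕ) = (i : ℕ) - 1 := rfl
    have hcond : ∀ l : Fin (n + 1),
        ((i : ℕ) = (l : ℕ) + 1 ∧ k + 1 ≤ (i : ℕ))
          ↔ (l = l₀ ∧ k + 1 ≤ (i : ℕ)) := by
      intro l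
      constructor
      · rintro ⟨h, hk⟩; exact ⟨Fin.ext (by rw [hl₀]; omega), hk⟩
      · rintro ⟨h, hk⟩; subst h; exact ⟨by rw [hl₀]; omega, hk⟩
    have hsum : (∑ l : Fin (n + 1),
          if (i : ℕ) = (l : ℕ) + 1 ∧ k + 1 ≤ (i : ℕ)
            then x * Gmat n x k l j else 0)
        = if k + 1 ≤ (i : ℕ) then x * Gmat n x k l₀ j else 0 := by
      rw [Finset.sum_congr rfl (fun l _ => if_congr (hcond l) rfl rfl)]
      by_cases hk : k + 1 ≤ (i : ℕ)
      · simp only [hk, and_true]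
        rw [Finset.sum_ite_eq' Finset.univ l₀ (fun l => x * Gmat n x k l j)]
        simp
      · simp [hk]
    rw [hsum]
    by_cases hk : k + 1 ≤ (i : ℕ)
    · rw [if_pos hk]
      have hmi : min (i : ℕ) k = k := by omega
      have hmi1 : min (i : ℕ) (k + 1) = k + 1 := by omega
      simp only [Gmat, hmi, hmi1, hl₀]
      by_cases hj : (j : ℕ) ≤ (i : ℕ)
      · rw [if_pos hj, if_pos hj]
        by_cases hji : (j : ℕ) = (i : ℕ)
        · rw [if_neg (by omega)]
          have h0 : (i : ℕ) - (j : ℕ) = 0 := by omega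
          rw [h0]
          simp
        · rw [if_pos (by omega : (j : ℕ) ≤ (i : ℕ) - 1)]
          have hmi2 : min ((i : ℕ) - 1) k = k := by omega
          rw [hmi2]
          have h1 : (i : ℕ) - (j : ℕ) = ((i : ℕ) - 1 - (j : ℕ)) + 1 := by omega
          rw [h1, Nat.choose_succ_succ']
          push_cast
          ring
      · rw [if_neg hj, if_neg hj, if_neg (by omega)]
        simp
    · rw [if_neg hk, add_zero]
      have : min (i : ℕ) k = min (i : ℕ) (k + 1) := by omega
      simp [Gmat, this]

lemma Fbar_prod_eq (n : ℕ) (x : ℝ) (k : ℕ) :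
    ((List.range k).map (fun s => Fbar n x (k - s))).prod = Gmat n x k := by
  induction k with
  | zero => simp [Gmat_zero]
  | succ k ih =>
    rw [List.range_succ_eq_map, List.map_cons, List.map_map, List.prod_cons]
    have hf : ((fun s => Fbar n x (k + 1 - s)) ∘ Nat.succ)
        = (fun s => Fbar n x (k - s)) := by
      funext s; simp [Nat.succ_sub_succ]
    rw [hf, ih, Nat.sub_zero, Gmat_step]

/-- `P_n[x] = F_n F_{n−1} ⋯ F_1`: the bidiagonal decomposition of the
generalized Pascal matrix of the first kind `P_n[x]` has all diagonal pivots
equal to `1` and all multipliers equal to `x`. -/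
theorem pascalFirst_bidiagonal_decomposition (n : ℕ) (x : ℝ) :
    pascalFirst n x
      = ((List.range n).map (fun s => Fbar n x (n - s))).prod := by
  rw [Fbar_prod_eq]
  ext i j
  have hmin : min (i : ℕ) n = (i : ℕ) := Nat.min_eq_left (Nat.lt_succ_iff.mp i.isLt)
  simp only [pascalFirst, Gmat, hmin]
  by_cases hj : (j : ℕ) ≤ (i : ℕ)
  · rw [if_pos hj, if_pos hj, Nat.choose_symm hj]
  · rw [if_neg hj, if_neg hj]
end
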